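/- Assume Properties 3 and 4. For every finite sequence of condensed reactions transforming a finite multiset Â of resting sets into a finite multiset B̂ of resting sets (each step removes the reactant multiset of one condensed reaction from the current multiset and adds its product multiset), and for every multiset A of complexes with A ~ Â and every multiset B of complexes with B ~ B̂, there exists a finite sequence of detailed reactions in R transforming A into B (each step removes the reactant multiset of one reaction of R from the current multiset of complexes and adds its product multiset). -/

import Mathlib

/-- A reaction: a pair (reactants, products) of finite multisets of complexes. -/
abbrev Rxn (C : Type*) := Multiset C × Multiset C

variable {C : Type*}

/-- Edge of the fast-reaction digraph Γ: a fast (1,1) reaction ({x}, {y}) in R. -/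
def FastEdge (R : Set (Rxn C)) (x y : C) : Prop :=
  ((({x} : Multiset C), ({y} : Multiset C)) : Rxn C) ∈ R

/-- Reachability along Γ. -/
def Reach (R : Set (Rxn C)) : C → C → Prop :=
  Relation.ReflTransGen (FastEdge R)

/-- The strongly connected component of Γ containing x. -/
def scc (R : Set (Rxn C)) (x : C) : Set C :=
  {y | Reach R x y ∧ Reach R y x}

/-- Q is a resting set: an SCC of Γ all of whose outgoing fast reactions stay in Q. -/
def IsRestingSet (R : Set (Rxn C)) (Q : Set C) : Prop :=
  (∃ x, Q = scc R x) ∧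
    ∀ r ∈ R, r.1.card = 1 → (∀ a ∈ r.1, a ∈ Q) → ∀ b ∈ r.2, b ∈ Q

/-- x is a resting complex: a member of some resting set. -/
def RestingComplex (R : Set (Rxn C)) (x : C) : Prop :=
  ∃ Q, IsRestingSet R Q ∧ x ∈ Q

/-- One step of a fast transition: replace one occurrence of x by the products of a
fast reaction ({x}, P) ∈ R. -/
def FastStep (R : Set (Rxn C)) (M N : Multiset C) : Prop :=
  ∃ (x : C) (P M' : Multiset C),
    ((({x} : Multiset C), P) : Rxn C) ∈ R ∧ M = x ::ₘ M' ∧ N = P + M'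

/-- A fast transition: finitely many fast steps. -/
def FastTransition (R : Set (Rxn C)) : Multiset C → Multiset C → Prop :=
  Relation.ReflTransGen (FastStep R)

/-- The fate predicate Fate(x, F), for x a complex and F a finite multiset of resting sets. -/
inductive Fate (R : Set (Rxn C)) : C → Multiset (Set C) → Prop
  | resting (x : C) (h : IsRestingSet R (scc R x)) :
      Fate R x {scc R x}
  | step (x a : C) (l : List (C × Multiset (Set C)))
      (hnr : ¬ IsRestingSet R (scc R x))
      (ha : a ∈ scc R x)
      (hr : ((({a} : Multiset C), (↑(l.map Prod.fst) : Multiset C)) : Rxn C) ∈ R)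
      (hout : ∃ b ∈ l.map Prod.fst, b ∉ scc R x)
      (hf : ∀ p ∈ l, Fate R p.1 p.2) :
      Fate R x (l.map Prod.snd).sum

/-- B ~ F : the multiset B of complexes represents the multiset F of resting sets,
i.e. there is a bijective matching pairing each b ∈ B with a Q ∈ F with b ∈ Q. -/
def Represents (B : Multiset C) (F : Multiset (Set C)) : Prop :=
  Multiset.Rel (fun b Q => b ∈ Q) B F

/-- F is a fate of the multiset P of complexes: F = F_1 + ... + F_n where
P = {b_1, ..., b_n} and Fate(b_i, F_i) for each i. -/
def FateM (R : Set (Rxn C)) (P : Multiset C) (F : Multiset (Set C)) : Prop :=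
  ∃ l : List (C × Multiset (Set C)),
    P = (↑(l.map Prod.fst) : Multiset C) ∧
    F = (l.map Prod.snd).sum ∧
    ∀ p ∈ l, Fate R p.1 p.2

/-- The condensed reactions: for each slow reaction ({a₁, a₂}, P) ∈ R and each fate F
of P, the condensed reaction ({SCC(a₁), SCC(a₂)}, F). -/
def IsCondensed (R : Set (Rxn C)) (Ahat Bhat : Multiset (Set C)) : Prop :=
  ∃ (a1 a2 : C) (P : Multiset C),
    ((({a1, a2} : Multiset C), P) : Rxn C) ∈ R ∧
    Ahat = ({scc R a1, scc R a2} : Multiset (Set C)) ∧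
    FateM R P Bhat

/-- Every reaction in R is fast (unimolecular) or slow (bimolecular). -/
def FastOrSlow (R : Set (Rxn C)) : Prop :=
  ∀ r ∈ R, r.1.card = 1 ∨ r.1.card = 2

/-- Reactants and products of every reaction are nonempty. -/
def NonemptyRxns (R : Set (Rxn C)) : Prop :=
  ∀ r ∈ R, r.1 ≠ 0 ∧ r.2 ≠ 0

/-- Property 3: every finite cyclic sequence of fast reactions, in which each reaction
consumes a product of the previous one (cyclically), consists of (1,1) reactions only. -/
def Prop3 (R : Set (Rxn C)) : Prop :=
  ∀ (n : ℕ) (hn : 0 < n) (r : Fin n → Rxn C),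
    (∀ i, r i ∈ R ∧ (r i).1.card = 1) →
    (∀ i : Fin n, ∀ a ∈ (r ⟨(i.1 + 1) % n, Nat.mod_lt _ hn⟩).1, a ∈ (r i).2) →
    ∀ i, (r i).2.card = 1

/-- Property 4: both reactants of every slow reaction are resting complexes. -/
def Prop4 (R : Set (Rxn C)) : Prop :=
  ∀ r ∈ R, r.1.card = 2 → ∀ a ∈ r.1, RestingComplex R a

/-- A resting-state transition from {a₁, a₂} to B: a slow reaction ({a₁, a₂}, P) ∈ R
followed by a fast transition from P to B. -/
def RestingTransition (R : Set (Rxn C)) (a1 a2 : C) (B : Multiset C) : Prop :=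
  ∃ P : Multiset C, ((({a1, a2} : Multiset C), P) : Rxn C) ∈ R ∧ FastTransition R P B

/-- One step of a sequence of detailed reactions: remove the reactants of some
reaction in R from the current multiset and add its products. -/
def DetailedStep (R : Set (Rxn C)) (M N : Multiset C) : Prop :=
  ∃ r ∈ R, ∃ M' : Multiset C, M = r.1 + M' ∧ N = r.2 + M'

/-- One step of a sequence of condensed reactions: remove the reactant multiset of a
condensed reaction from the current multiset of resting sets and add its products. -/
def CondensedStep (R : Set (Rxn C)) (M N : Multiset (Set C)) : Prop :=
  ∃ Ahat Bhat M' : Multiset (Set C),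
    IsCondensed R Ahat Bhat ∧ M = Ahat + M' ∧ N = Bhat + M'

/-!
A condensed reaction comes from a slow reaction `({a₁, a₂}, P)` and a fate `F` of `P`, and the
fate predicate is itself a record of fast reactions. So a detailed sequence realising one
condensed step moves each reactant to `a₁`, `a₂` along the fast digraph (inside their SCCs),
fires the slow reaction, and then follows the fast reactions recorded in the fate of each
product down to the chosen representatives of `F`. Representatives of the same multiset of SCCs
are interconvertible by fast (1,1) reactions, so the choice of representatives at each
intermediate stage, and of `A` and `B` at the ends, does not matter.
-/

section DetailedSeq

variable {R : Set (Rxn C)}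

lemma detailedSeq_add_right {M N : Multiset C} (K : Multiset C)
    (h : Relation.ReflTransGen (DetailedStep R) M N) :
    Relation.ReflTransGen (DetailedStep R) (M + K) (N + K) := by
  induction h with
  | refl => exact .refl
  | tail _ hstep ih =>
    obtain ⟨r, hr, M', rfl, rfl⟩ := hstep
    exact ih.tail ⟨r, hr, M' + K, add_assoc .., add_assoc ..⟩

lemma detailedSeq_add {M N M' N' : Multiset C}
    (h : Relation.ReflTransGen (DetailedStep R) M N)
    (h' : Relation.ReflTransGen (DetailedStep R) M' N') :
    Relation.ReflTransGen (DetailedStep R) (M + M') (N + N') := by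
  refine (detailedSeq_add_right M' h).trans ?_
  rw [add_comm N M', add_comm N N']
  exact detailedSeq_add_right N h'

lemma Reach.detailedSeq {x y : C} (h : Reach R x y) :
    Relation.ReflTransGen (DetailedStep R) {x} {y} := by
  induction h with
  | refl => exact .refl
  | @tail y z _ hyz ih => exact ih.tail ⟨({y}, {z}), hyz, 0, by simp, by simp⟩

lemma detailedSeq_of_rel_reach {A B : Multiset C} (h : Multiset.Rel (Reach R) A B) :
    Relation.ReflTransGen (DetailedStep R) A B := by
  induction h with
  | zero => exact .refl
  | @cons a b A B hab _ ih =>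
    rw [← Multiset.singleton_add, ← Multiset.singleton_add]
    exact detailedSeq_add hab.detailedSeq ih

lemma mem_scc_self (R : Set (Rxn C)) (x : C) : x ∈ scc R x :=
  ⟨.refl, .refl⟩

lemma reach_of_mem_scc {x a b : C} (ha : a ∈ scc R x) (hb : b ∈ scc R x) : Reach R a b :=
  ha.2.trans hb.1

lemma Represents.rel_reach {A B : Multiset C} {F : Multiset (Set C)}
    (hF : ∀ Q ∈ F, ∃ x, Q = scc R x) (hA : Represents A F) (hB : Represents B F) :
    Multiset.Rel (Reach R) A B := by
  induction hA generalizing B with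
  | zero => rw [Multiset.rel_zero_right.mp hB]; exact .zero
  | @cons a Q A F haQ _ ih =>
    obtain ⟨b, B', hbQ, hB', rfl⟩ := Multiset.rel_cons_right.mp hB
    obtain ⟨x, rfl⟩ := hF Q (Multiset.mem_cons_self _ _)
    exact .cons (reach_of_mem_scc haQ hbQ)
      (ih (fun Q hQ => hF Q (Multiset.mem_cons_of_mem hQ)) hB')

lemma detailedSeq_of_represents {A B : Multiset C} {F : Multiset (Set C)}
    (hF : ∀ Q ∈ F, ∃ x, Q = scc R x) (hA : Represents A F) (hB : Represents B F) :
    Relation.ReflTransGen (DetailedStep R) A B :=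
  detailedSeq_of_rel_reach (hA.rel_reach hF hB)

lemma exists_represents_sum {L : List (Multiset (Set C))}
    (h : ∀ F ∈ L, ∃ B : Multiset C, Represents B F) : ∃ B : Multiset C, Represents B L.sum := by
  induction L with
  | nil => exact ⟨0, .zero⟩
  | cons F L ih =>
    obtain ⟨B, hB⟩ := h F List.mem_cons_self
    obtain ⟨B', hB'⟩ := ih fun F' hF' => h F' (List.mem_cons_of_mem _ hF')
    exact ⟨B + B', hB.add hB'⟩

lemma Fate.exists_represents {x : C} {F : Multiset (Set C)} (h : Fate R x F) :
    ∃ B : Multiset C, Represents B F := by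
  induction h with
  | resting x _ => exact ⟨{x}, .cons (mem_scc_self R x) .zero⟩
  | step x a l _ _ _ _ _ ih =>
    refine exists_represents_sum fun F hF => ?_
    obtain ⟨p, hp, rfl⟩ := List.mem_map.mp hF
    exact ih p hp

lemma FateM.exists_represents {P : Multiset C} {F : Multiset (Set C)} (h : FateM R P F) :
    ∃ B : Multiset C, Represents B F := by
  obtain ⟨l, -, rfl, hl⟩ := h
  refine exists_represents_sum fun F hF => ?_
  obtain ⟨p, hp, rfl⟩ := List.mem_map.mp hF
  exact (hl p hp).exists_represents

lemma detailedSeq_map_fst_of_forall (l : List (C × Multiset (Set C)))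
    (hl : ∀ p ∈ l, ∀ B : Multiset C, Represents B p.2 →
      Relation.ReflTransGen (DetailedStep R) {p.1} B)
    {B : Multiset C} (hB : Represents B (l.map Prod.snd).sum) :
    Relation.ReflTransGen (DetailedStep R) ↑(l.map Prod.fst) B := by
  induction l generalizing B with
  | nil =>
    rw [Multiset.rel_zero_right.mp hB]
    exact .refl
  | cons p l ih =>
    obtain ⟨B₁, B₂, hB₁, hB₂, rfl⟩ := Multiset.rel_add_right.mp hB
    rw [List.map_cons, ← Multiset.cons_coe, ← Multiset.singleton_add]
    exact detailedSeq_add (hl p List.mem_cons_self B₁ hB₁)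
      (ih (fun q hq => hl q (List.mem_cons_of_mem _ hq)) hB₂)

lemma Fate.detailedSeq {x : C} {F : Multiset (Set C)} (h : Fate R x F) {B : Multiset C}
    (hB : Represents B F) : Relation.ReflTransGen (DetailedStep R) {x} B := by
  induction h generalizing B with
  | resting x _ =>
    obtain ⟨b, B', hb, hB', rfl⟩ := Multiset.rel_cons_right.mp hB
    rw [Multiset.rel_zero_right.mp hB']
    exact hb.1.detailedSeq
  | step x a l _ ha hr _ _ ih =>
    have hfire : DetailedStep R {a} ↑(l.map Prod.fst) := ⟨_, hr, 0, by simp, by simp⟩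
    exact (ha.1.detailedSeq.tail hfire).trans
      (detailedSeq_map_fst_of_forall l (fun p hp _ => ih p hp) hB)

lemma FateM.detailedSeq {P : Multiset C} {F : Multiset (Set C)} (h : FateM R P F)
    {B : Multiset C} (hB : Represents B F) : Relation.ReflTransGen (DetailedStep R) P B := by
  obtain ⟨l, rfl, rfl, hl⟩ := h
  exact detailedSeq_map_fst_of_forall l (fun p hp _ => (hl p hp).detailedSeq) hB

lemma IsCondensed.exists_detailedSeq {Ahat Bhat : Multiset (Set C)}
    (h : IsCondensed R Ahat Bhat) {A : Multiset C} (hA : Represents A Ahat) :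
    ∃ B : Multiset C, Represents B Bhat ∧ Relation.ReflTransGen (DetailedStep R) A B := by
  obtain ⟨a₁, a₂, P, hslow, rfl, hfate⟩ := h
  obtain ⟨B, hB⟩ := hfate.exists_represents
  have hreach : Multiset.Rel (Reach R) A {a₁, a₂} := by
    have hA' : Represents A (Multiset.map (scc R) {a₁, a₂}) := by simpa using hA
    exact (Multiset.rel_map_right.mp hA').mono fun a _ x _ hax => hax.2
  have hfire : DetailedStep R {a₁, a₂} P := ⟨_, hslow, 0, by simp, by simp⟩
  exact ⟨B, hB, ((detailedSeq_of_rel_reach hreach).tail hfire).trans (hfate.detailedSeq hB)⟩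

lemma CondensedStep.exists_detailedSeq {Ahat Bhat : Multiset (Set C)}
    (h : CondensedStep R Ahat Bhat) {A : Multiset C} (hA : Represents A Ahat) :
    ∃ B : Multiset C, Represents B Bhat ∧ Relation.ReflTransGen (DetailedStep R) A B := by
  obtain ⟨Ahat₁, Bhat₁, M, hcond, rfl, rfl⟩ := h
  obtain ⟨A₁, A₂, hA₁, hA₂, rfl⟩ := Multiset.rel_add_right.mp hA
  obtain ⟨B₁, hB₁, hAB₁⟩ := hcond.exists_detailedSeq hA₁
  exact ⟨B₁ + A₂, hB₁.add hA₂, detailedSeq_add_right A₂ hAB₁⟩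

lemma exists_detailedSeq_of_condensedSeq {Ahat Bhat : Multiset (Set C)}
    (h : Relation.ReflTransGen (CondensedStep R) Ahat Bhat) {A : Multiset C}
    (hA : Represents A Ahat) :
    ∃ B : Multiset C, Represents B Bhat ∧ Relation.ReflTransGen (DetailedStep R) A B := by
  induction h with
  | refl => exact ⟨A, hA, .refl⟩
  | tail _ hstep ih =>
    obtain ⟨B, hB, hAB⟩ := ih
    obtain ⟨B', hB', hBB'⟩ := hstep.exists_detailedSeq hB
    exact ⟨B', hB', hAB.trans hBB'⟩

end DetailedSeq

theorem condensed_seq_to_detailed_seq_general {C : Type*} (R : Set (Rxn C))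
    (Ahat Bhat : Multiset (Set C))
    (hB : ∀ Q ∈ Bhat, IsRestingSet R Q)
    (hseq : Relation.ReflTransGen (CondensedStep R) Ahat Bhat)
    (A B : Multiset C) (hAr : Represents A Ahat) (hBr : Represents B Bhat) :
    Relation.ReflTransGen (DetailedStep R) A B := by
  obtain ⟨B', hB', hAB'⟩ := exists_detailedSeq_of_condensedSeq hseq hAr
  exact hAB'.trans (detailedSeq_of_represents (fun Q hQ => (hB Q hQ).1) hB' hBr)

/-- Corollary 1: any sequence of condensed reactions from Â to B̂ can be realized,
for any A ~ Â and B ~ B̂, by a sequence of detailed reactions from A to B. -/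
theorem condensed_seq_to_detailed_seq {C : Type*} [Fintype C] (R : Set (Rxn C))
    (hRfin : R.Finite) (hne : NonemptyRxns R) (hfs : FastOrSlow R)
    (h3 : Prop3 R) (h4 : Prop4 R)
    (Ahat Bhat : Multiset (Set C))
    (hA : ∀ Q ∈ Ahat, IsRestingSet R Q) (hB : ∀ Q ∈ Bhat, IsRestingSet R Q)
    (hseq : Relation.ReflTransGen (CondensedStep R) Ahat Bhat)
    (A B : Multiset C) (hAr : Represents A Ahat) (hBr : Represents B Bhat) :
    Relation.ReflTransGen (DetailedStep R) A B :=
  condensed_seq_to_detailed_seq_general R Ahat Bhat hB hseq A B hAr hBr
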